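/- arXiv:1808.09485 — 5 statements merged into one kernel-verified Lean document; each statement's English description precedes it below -/
import Mathlib

section
/- Let n ≥ 1 and for u ∈ ℝⁿ (indexed 1,…,n) let v ∈ ℝⁿ be defined by v_m = (u_m − u_{m−2})/2 with the convention u_0 = u_{−1} = 0 (this is the scaled linear part h·A_n of the explicit two-step midpoint method with zero right-hand side). Then for every S > 0 and every n₀ ∈ ℕ there exist n ≥ n₀ and a vector u ∈ ℝⁿ such that max_{1≤i≤n}|u_i| > S · max_{1≤l≤n}|∑_{i=1}^l v_i|. In particular, the explicit two-step midpoint method is not stable in the norm pair (‖·‖_{2∞}, ‖·‖_{2$}). -/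
/-- The sup-norm of the vector `(u 1, …, u n)` (indices `1,…,n`). -/
noncomputable def supNorm (n : ℕ) (u : ℕ → ℝ) : ℝ :=
  (((Finset.Icc 1 n).sup fun i => ‖u i‖₊ : NNReal) : ℝ)

/-- The Spijker seminorm (without the factor `h`) of the vector `(u 1, …, u n)`:
`max_{1 ≤ l ≤ n} |∑_{i=1}^{l} u i|`. -/
noncomputable def spijkerSeminorm (n : ℕ) (u : ℕ → ℝ) : ℝ :=
  (((Finset.Icc 1 n).sup fun l => ‖∑ i ∈ Finset.Icc 1 l, u i‖₊ : NNReal) : ℝ)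

/-- The scaled linear part `h·A_n` of the explicit two-step midpoint method:
`v m = (u m - u (m-2)) / 2` with the convention `u 0 = u (-1) = 0`. -/
noncomputable def midpointV (u : ℕ → ℝ) : ℕ → ℝ :=
  fun m => (u m - (if 2 ≤ m then u (m - 2) else 0)) / 2

lemma midpoint_sum_formula (l : ℕ) (hl : 1 ≤ l) :
    ∑ i ∈ Finset.Icc 1 l, midpointV (fun i => (-1 : ℝ)^i * i) i = (-1)^l / 2 := by
  induction l with
  | zero => omega
  | succ k ih =>
    rcases Nat.lt_or_ge k 1 with h | h
    · interval_cases k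
      simp [midpointV]
    · rw [Finset.sum_Icc_succ_top (by omega), ih h]
      obtain ⟨j, rfl⟩ : ∃ j, k = j + 1 := ⟨k - 1, by omega⟩
      have h2 : 2 ≤ j + 1 + 1 := by omega
      simp only [midpointV, if_pos h2]
      have : j + 1 + 1 - 2 = j := by omega
      rw [this]
      push_cast
      ring

/-- The explicit two-step midpoint method is not stable in the norm pair
`(‖·‖_{2∞}, ‖·‖_{2$})`: for every `S > 0` and every `n₀` there are `n ≥ n₀`, `n ≥ 1`,
and `u ∈ ℝⁿ` with `max_{1≤i≤n} |u i| > S · max_{1≤l≤n} |∑_{i=1}^{l} v i|`, where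
`v = midpointV u` is the scaled linear part of the method applied to `u`. -/
theorem midpoint_not_stable_spijker (S : ℝ) (hS : 0 < S) (n₀ : ℕ) :
    ∃ n : ℕ, n₀ ≤ n ∧ 1 ≤ n ∧ ∃ u : ℕ → ℝ,
      supNorm n u > S * spijkerSeminorm n (midpointV u) := by
  set n := n₀ + ⌈S⌉₊ + 1 with hn
  refine ⟨n, by omega, by omega, fun i => (-1 : ℝ)^i * i, ?_⟩
  have hspij : spijkerSeminorm n (midpointV fun i => (-1 : ℝ)^i * i) ≤ 1/2 := by
    have : ((Finset.Icc 1 n).sup fun l =>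
        ‖∑ i ∈ Finset.Icc 1 l, midpointV (fun i => (-1 : ℝ)^i * i) i‖₊ : NNReal) ≤ 1/2 := by
      apply Finset.sup_le
      intro l hl
      rw [midpoint_sum_formula l (Finset.mem_Icc.mp hl).1]
      have : ‖((-1 : ℝ)^l / 2)‖₊ = 1/2 := by
        simp [nnnorm_div]
      rw [this]
    calc spijkerSeminorm n (midpointV fun i => (-1 : ℝ)^i * i)
        ≤ ((1/2 : NNReal) : ℝ) := NNReal.coe_le_coe.mpr this
      _ = 1/2 := by norm_num
  have hsup : (n : ℝ) ≤ supNorm n (fun i => (-1 : ℝ)^i * i) := by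
    have hmem : n ∈ Finset.Icc 1 n := Finset.mem_Icc.mpr ⟨by omega, le_refl n⟩
    have hle := Finset.le_sup (s := Finset.Icc 1 n) (f := fun i => ‖(-1 : ℝ)^i * i‖₊) hmem
    have := NNReal.coe_le_coe.mpr hle
    calc (n : ℝ) = ‖(-1 : ℝ)^n * n‖ := by
          rw [norm_mul, norm_pow]; simp
      _ ≤ supNorm n (fun i => (-1 : ℝ)^i * i) := by
          unfold supNorm; exact_mod_cast this
  have hSn : S < n := by
    calc S ≤ (⌈S⌉₊ : ℝ) := Nat.le_ceil S
      _ < n := by exact_mod_cast Nat.lt_of_lt_of_le (by omega) (le_refl n)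
  calc S * spijkerSeminorm n (midpointV fun i => (-1 : ℝ)^i * i)
      ≤ S * (1/2) := by
        apply mul_le_mul_of_nonneg_left hspij hS.le
    _ < n := by nlinarith
    _ ≤ supNorm n (fun i => (-1 : ℝ)^i * i) := hsup
end

section
/- Let n ≥ 1 and define u ∈ ℝⁿ by u_m = m·(−1)^{m+1} for m = 1,…,n (so u = (1, −2, 3, −4, …)). Define v ∈ ℝⁿ by v_m = (u_m − u_{m−2})/2 with the convention u_0 = u_{−1} = 0. Then max_{1≤i≤n}|u_i| = n, v = (1/2, −1, 1, −1, 1, …) (i.e. v_1 = 1/2 and v_m = (−1)^{m+1} for m ≥ 2), and max_{1≤l≤n} |∑_{i=1}^l v_i| = 1/2. -/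
lemma vm_aux (m : ℕ) (h : 2 ≤ m) :
    midpointV (fun m => (m : ℝ) * (-1) ^ (m + 1)) m = (-1) ^ (m + 1) := by
  obtain ⟨k, rfl⟩ := Nat.exists_eq_add_of_le h
  simp only [midpointV, if_pos (by omega : 2 ≤ 2 + k), Nat.add_sub_cancel_left]
  have : ((2 + k : ℕ) : ℝ) = (k : ℝ) + 2 := by push_cast; ring
  rw [this, show 2 + k + 1 = (k + 1) + 2 by ring, pow_add]
  ring

lemma sum_v (l : ℕ) (h : 1 ≤ l) :
    ∑ i ∈ Finset.Icc 1 l, midpointV (fun m => (m : ℝ) * (-1) ^ (m + 1)) i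
      = (-1) ^ (l + 1) / 2 := by
  induction l with
  | zero => omega
  | succ l ih =>
    rcases Nat.eq_or_lt_of_le h with h1 | h1
    · simp [← h1, midpointV]
    · have hl : 1 ≤ l := by omega
      rw [Finset.sum_Icc_succ_top (by omega : 1 ≤ l + 1), ih hl,
        vm_aux (l + 1) (by omega)]
      rw [show l + 1 + 1 = l + 2 by ring, pow_add, pow_add]
      ring

/-- Spijker's witness vector: for `u = (1, -2, 3, -4, …)`, i.e. `u m = m·(-1)^(m+1)`,
one has `max_{1≤i≤n}|u i| = n`, the image `v = midpointV u` equals `(1/2, -1, 1, -1, …)`,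
and `max_{1≤l≤n}|∑_{i=1}^l v i| = 1/2`. -/
theorem midpoint_witness (n : ℕ) (hn : 1 ≤ n) :
    let u : ℕ → ℝ := fun m => m * (-1) ^ (m + 1)
    let v : ℕ → ℝ := midpointV u
    supNorm n u = n ∧
    v 1 = 1 / 2 ∧
    (∀ m, 2 ≤ m → m ≤ n → v m = (-1) ^ (m + 1)) ∧
    spijkerSeminorm n v = 1 / 2 := by
  intro u v
  have hnorm : ∀ i : ℕ, ‖u i‖₊ = (i : NNReal) := by
    intro i
    ext
    simp only [u, coe_nnnorm, Real.norm_eq_abs, abs_mul, abs_pow, abs_neg, abs_one,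
      one_pow, mul_one, Nat.abs_cast, NNReal.coe_natCast]
  refine ⟨?_, ?_, ?_, ?_⟩
  · unfold supNorm
    have : ((Finset.Icc 1 n).sup fun i => ‖u i‖₊) = (n : NNReal) := by
      apply le_antisymm
      · exact Finset.sup_le fun i hi => by
          rw [hnorm]; exact_mod_cast Nat.cast_le.mpr (Finset.mem_Icc.mp hi).2
      · have := Finset.le_sup (f := fun i => ‖u i‖₊)
          (Finset.mem_Icc.mpr ⟨hn, le_refl n⟩)
        simpa [hnorm] using this
    rw [this]; simp
  · simp [v, midpointV, u]
  · intro m h2 _; exact vm_aux m h2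
  · unfold spijkerSeminorm
    have hs : ∀ l ∈ Finset.Icc 1 n, ‖∑ i ∈ Finset.Icc 1 l, v i‖₊ = (1 / 2 : NNReal) := by
      intro l hl
      rw [sum_v l (Finset.mem_Icc.mp hl).1]
      ext
      rcases Nat.even_or_odd (l + 1) with he | ho
      · rw [he.neg_one_pow]; norm_num
      · rw [ho.neg_one_pow]; norm_num
    have : ((Finset.Icc 1 n).sup fun l => ‖∑ i ∈ Finset.Icc 1 l, v i‖₊) = (1/2 : NNReal) := by
      rw [Finset.sup_congr rfl hs]
      apply le_antisymm
      · exact Finset.sup_le fun l hl => le_refl _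
      · exact Finset.le_sup (f := fun _ => (1/2 : NNReal)) (Finset.mem_Icc.mpr ⟨hn, le_refl n⟩)
    rw [this]; simp
end

section
/- Let k ≥ 2 and let α_0, α_1, …, α_k ∈ ℝ with α_0 ≠ 0. Let ϱ(z) = ∑_{j=0}^k α_j z^{k−j} and assume: every complex root ξ of ϱ satisfies |ξ| ≤ 1, every root with |ξ| = 1 is simple, 1 is a root of ϱ, and there exists a root ξ₂ with |ξ₂| = 1 and ξ₂ ≠ 1 (i.e., the linear multistep method with first characteristic polynomial ϱ is weakly stable). For n ≥ 1 and u ∈ ℝⁿ define (M_n u)_m = ∑_{j=0}^{min(k, m−1)} α_j u_{m−j} for m = 1,…,n (the scaled linear part h·A_n of the method). Then for every S > 0 and every n₀ ∈ ℕ there exist n ≥ n₀ and u ∈ ℝⁿ such that max_{1≤i≤n}|u_i| > S · max_{1≤l≤n}|∑_{i=1}^l (M_n u)_i|. In particular, weakly stable linear multistep methods are not stable in the norm pair (‖·‖_{k∞}, ‖·‖_{k$}). -/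
/-- The scaled linear part `h·A_n` of a `k`-step linear multistep method with
coefficients `α`: `(M_n u) m = ∑_{j=0}^{min(k, m-1)} α j · u (m - j)` for `m = 1,…,n`. -/
noncomputable def lmmM (k : ℕ) (α : ℕ → ℝ) (u : ℕ → ℝ) : ℕ → ℝ :=
  fun m => ∑ j ∈ Finset.range (min k (m - 1) + 1), α j * u (m - j)

/- ### Auxiliary lemmas -/

/-- `|u t| ≤ t` for `u t = Re(t ξ^t)`, `|ξ| = 1`. -/
lemma aux_abs_u_le {ξ : ℂ} (hξ : ‖ξ‖ = 1) (t : ℕ) :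
    |(((t : ℕ) : ℂ) * ξ ^ t).re| ≤ (t : ℝ) := by
  calc |(((t : ℕ) : ℂ) * ξ ^ t).re| ≤ ‖((t : ℕ) : ℂ) * ξ ^ t‖ :=
        Complex.abs_re_le_norm _
    _ = (t : ℝ) := by
        rw [norm_mul, norm_pow, hξ, one_pow, mul_one, Complex.norm_natCast]

/-- The sup norm dominates each entry. -/
lemma aux_le_supNorm (n : ℕ) (u : ℕ → ℝ) {i : ℕ} (hi : i ∈ Finset.Icc 1 n) :
    |u i| ≤ supNorm n u := by
  have h := Finset.le_sup (f := fun i => ‖u i‖₊) hi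
  have : (‖u i‖₊ : ℝ) ≤ supNorm n u := NNReal.coe_le_coe.mpr h
  simpa [coe_nnnorm, Real.norm_eq_abs] using this

/-- Upper bound for the Spijker seminorm from bounds on all partial sums. -/
lemma aux_spijker_le (n : ℕ) (v : ℕ → ℝ) {C : ℝ} (hC : 0 ≤ C)
    (h : ∀ l, |∑ i ∈ Finset.Icc 1 l, v i| ≤ C) : spijkerSeminorm n v ≤ C := by
  unfold spijkerSeminorm
  rw [← Real.coe_toNNReal C hC]
  refine NNReal.coe_le_coe.mpr (Finset.sup_le fun l _ => ?_)
  rw [Real.le_toNNReal_iff_coe_le hC]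
  simpa [coe_nnnorm, Real.norm_eq_abs] using h l

/-- Tail formula: for `m ≥ k+1`,
`∑_j α_j (m-j) ξ^(m-j) = ξ^(m-k) * D` where `D = ∑_j α_j (k-j) ξ^(k-j)`, provided
`∑_j α_j ξ^(k-j) = 0`. -/
lemma aux_tail (k : ℕ) (α : ℕ → ℝ) (ξ : ℂ)
    (hroot : ∑ j ∈ Finset.range (k + 1), ((α j : ℂ)) * ξ ^ (k - j) = 0)
    (m : ℕ) (hm : k + 1 ≤ m) :
    ∑ j ∈ Finset.range (k + 1), ((α j : ℂ)) * (((m - j : ℕ) : ℂ)) * ξ ^ (m - j)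
      = ξ ^ (m - k) *
        ∑ j ∈ Finset.range (k + 1), ((α j : ℂ)) * (((k - j : ℕ) : ℂ)) * ξ ^ (k - j) := by
  have key : ∀ j ∈ Finset.range (k + 1),
      ((α j : ℂ)) * (((m - j : ℕ) : ℂ)) * ξ ^ (m - j)
        = ξ ^ (m - k) * ((((m - k : ℕ) : ℂ)) * (((α j : ℂ)) * ξ ^ (k - j)))
          + ξ ^ (m - k) * (((α j : ℂ)) * (((k - j : ℕ) : ℂ)) * ξ ^ (k - j)) := by
    intro j hj
    have hjk : j ≤ k := Nat.lt_succ_iff.mp (Finset.mem_range.mp hj)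
    have h1 : m - j = (m - k) + (k - j) := by omega
    have h2 : (((m - j : ℕ) : ℂ)) = (((m - k : ℕ) : ℂ)) + (((k - j : ℕ) : ℂ)) := by
      have : (m - j : ℕ) = (m - k : ℕ) + (k - j : ℕ) := by omega
      rw [this]; push_cast; ring
    rw [h2, h1, pow_add]; ring
  rw [Finset.sum_congr rfl key, Finset.sum_add_distrib, ← Finset.mul_sum, ← Finset.mul_sum,
    ← Finset.mul_sum, hroot]
  ring

/-- Geometric sum bound. -/
lemma aux_geom (ξ : ℂ) (h1 : ‖ξ‖ = 1) (hne : ξ ≠ 1) (N : ℕ) :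
    ‖∑ t ∈ Finset.range N, ξ ^ (t + 1)‖ ≤ 2 / ‖ξ - 1‖ := by
  have hsum : ∑ t ∈ Finset.range N, ξ ^ (t + 1) = ξ * ((ξ ^ N - 1) / (ξ - 1)) := by
    rw [← geom_sum_eq hne, Finset.mul_sum]
    exact Finset.sum_congr rfl fun t _ => by ring
  have hpos : 0 < ‖ξ - 1‖ := by
    exact norm_pos_iff.mpr (sub_ne_zero.mpr hne)
  rw [hsum, norm_mul, h1, one_mul, norm_div]
  have hnum : ‖ξ ^ N - 1‖ ≤ 2 := by
    calc ‖ξ ^ N - 1‖ ≤ ‖ξ ^ N‖ + ‖(1 : ℂ)‖ :=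
          norm_sub_le _ _
      _ = 2 := by rw [norm_pow, h1, one_pow, norm_one]; norm_num
  gcongr

/-- Weakly stable linear multistep methods are not stable in the norm pair
`(‖·‖_{k∞}, ‖·‖_{k$})`. Here `ϱ(z) = ∑_{j=0}^k α_j z^{k-j}` is the first characteristic
polynomial; weak stability means: all roots have modulus `≤ 1`, roots of modulus `1` are
simple, `1` is a root, and some root `ξ₂` has `|ξ₂| = 1`, `ξ₂ ≠ 1`. -/
theorem weakly_stable_not_stable_spijker (k : ℕ) (hk : 2 ≤ k)
    (α : ℕ → ℝ) (hα0 : α 0 ≠ 0)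
    (ϱ : Polynomial ℂ)
    (hϱ : ϱ = ∑ j ∈ Finset.range (k + 1), Polynomial.C ((α j : ℂ)) * Polynomial.X ^ (k - j))
    (hroots : ∀ ξ : ℂ, ϱ.IsRoot ξ → ‖ξ‖ ≤ 1)
    (hsimple : ∀ ξ : ℂ, ϱ.IsRoot ξ → ‖ξ‖ = 1 → ϱ.rootMultiplicity ξ = 1)
    (hone : ϱ.IsRoot 1)
    (hweak : ∃ ξ₂ : ℂ, ϱ.IsRoot ξ₂ ∧ ‖ξ₂‖ = 1 ∧ ξ₂ ≠ 1)
    (S : ℝ) (hS : 0 < S) (n₀ : ℕ) :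
    ∃ n : ℕ, n₀ ≤ n ∧ 1 ≤ n ∧ ∃ u : ℕ → ℝ,
      supNorm n u > S * spijkerSeminorm n (lmmM k α u) := by
  obtain ⟨ξ, hξroot, hξabs, hξne⟩ := hweak
  -- the oscillating resonant vector
  set u : ℕ → ℝ := fun t => (((t : ℕ) : ℂ) * ξ ^ t).re with hu
  -- root equation
  have hroot : ∑ j ∈ Finset.range (k + 1), ((α j : ℂ)) * ξ ^ (k - j) = 0 := by
    have h := hξroot
    rw [hϱ] at h
    simpa [Polynomial.IsRoot, Polynomial.eval_finset_sum] using h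
  set D : ℂ := ∑ j ∈ Finset.range (k + 1), ((α j : ℂ)) * (((k - j : ℕ) : ℂ)) * ξ ^ (k - j)
    with hD
  set A : ℝ := ∑ j ∈ Finset.range (k + 1), |α j| with hA
  have hA0 : 0 ≤ A := Finset.sum_nonneg fun j _ => abs_nonneg _
  set G : ℝ := 2 / ‖ξ - 1‖ with hG
  have hG0 : 0 ≤ G := by
    apply div_nonneg (by norm_num) (norm_nonneg _)
  set C : ℝ := (k : ℝ) * ((k : ℝ) * A) + ‖D‖ * G with hC
  have hC0 : 0 ≤ C := by
    apply add_nonneg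
    · positivity
    · exact mul_nonneg (norm_nonneg _) hG0
  clear_value D A G C
  -- boundary bound: for i ≤ k, |lmmM k α u i| ≤ k * A
  have hbdry : ∀ i : ℕ, i ≤ k → |lmmM k α u i| ≤ (k : ℝ) * A := by
    intro i hik
    unfold lmmM
    calc |∑ j ∈ Finset.range (min k (i - 1) + 1), α j * u (i - j)|
        ≤ ∑ j ∈ Finset.range (min k (i - 1) + 1), |α j * u (i - j)| :=
          Finset.abs_sum_le_sum_abs _ _
      _ ≤ ∑ j ∈ Finset.range (min k (i - 1) + 1), |α j| * (k : ℝ) := by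
          apply Finset.sum_le_sum
          intro j _
          rw [abs_mul]
          apply mul_le_mul_of_nonneg_left _ (abs_nonneg _)
          calc |u (i - j)| ≤ ((i - j : ℕ) : ℝ) := aux_abs_u_le hξabs _
            _ ≤ (k : ℝ) := by exact_mod_cast Nat.cast_le.mpr (le_trans (Nat.sub_le i j) hik)
      _ ≤ ∑ j ∈ Finset.range (k + 1), |α j| * (k : ℝ) := by
          apply Finset.sum_le_sum_of_subset_of_nonneg
          · apply Finset.range_subset_range.mpr; omega
          · intro j _ _; positivity
      _ = (k : ℝ) * A := by
          rw [hA, Finset.mul_sum]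
          exact Finset.sum_congr rfl fun j _ => mul_comm _ _
  -- tail value: for m ≥ k+1, lmmM k α u m = (ξ^(m-k) * D).re
  have htail : ∀ m : ℕ, k + 1 ≤ m → lmmM k α u m = (ξ ^ (m - k) * D).re := by
    intro m hm
    unfold lmmM
    have hmin : min k (m - 1) = k := by omega
    rw [hmin]
    have : ∀ j ∈ Finset.range (k + 1),
        α j * u (m - j) = (((α j : ℂ)) * (((m - j : ℕ) : ℂ)) * ξ ^ (m - j)).re := by
      intro j _
      simp only [hu]
      rw [mul_assoc]
      exact (Complex.re_ofReal_mul _ _).symm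
    rw [Finset.sum_congr rfl this, ← Complex.re_sum, aux_tail k α ξ hroot m hm, ← hD]
  -- bound on all partial sums of lmmM k α u
  have hpartial : ∀ l : ℕ, |∑ i ∈ Finset.Icc 1 l, lmmM k α u i| ≤ C := by
    intro l
    by_cases hl : l ≤ k
    · calc |∑ i ∈ Finset.Icc 1 l, lmmM k α u i|
          ≤ ∑ i ∈ Finset.Icc 1 l, |lmmM k α u i| := Finset.abs_sum_le_sum_abs _ _
        _ ≤ (Finset.Icc 1 l).card • ((k : ℝ) * A) := by
            apply Finset.sum_le_card_nsmul
            intro i hi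
            exact hbdry i (le_trans (Finset.mem_Icc.mp hi).2 hl)
        _ ≤ C := by
            rw [Nat.card_Icc, nsmul_eq_mul]
            have h1 : ((l + 1 - 1 : ℕ) : ℝ) ≤ (k : ℝ) := by
              exact_mod_cast Nat.cast_le.mpr (by omega)
            calc ((l + 1 - 1 : ℕ) : ℝ) * ((k : ℝ) * A) ≤ (k : ℝ) * ((k : ℝ) * A) := by
                  apply mul_le_mul_of_nonneg_right h1; positivity
              _ ≤ C := by
                  rw [hC]
                  have : 0 ≤ ‖D‖ * G :=
                    mul_nonneg (norm_nonneg _) hG0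
                  linarith
    · push_neg at hl
      have hkl : k ≤ l := le_of_lt hl
      have hsplit : ∑ i ∈ Finset.Icc 1 l, lmmM k α u i
          = ∑ i ∈ Finset.Ioc 0 k, lmmM k α u i + ∑ i ∈ Finset.Ioc k l, lmmM k α u i := by
        rw [show (1 : ℕ) = 0 + 1 from rfl, Finset.Icc_add_one_left_eq_Ioc,
          Finset.sum_Ioc_consecutive _ (Nat.zero_le k) hkl]
      -- tail reindexing
      have htsum : ∑ i ∈ Finset.Ioc k l, lmmM k α u i
          = ((∑ t ∈ Finset.range (l - k), ξ ^ (t + 1)) * D).re := by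
        have h1 : ∀ i ∈ Finset.Ioc k l, lmmM k α u i = (ξ ^ (i - k) * D).re := by
          intro i hi
          exact htail i (by
            have := (Finset.mem_Ioc.mp hi).1; omega)
        rw [Finset.sum_congr rfl h1]
        have h2 : Finset.Ioc k l = Finset.Ico (k + 1) (l + 1) := by
          ext i; simp [Nat.lt_succ_iff, Nat.succ_le_iff]
        have h4 : ((∑ t ∈ Finset.range (l - k), ξ ^ (t + 1)) * D).re
            = ∑ t ∈ Finset.range (l - k), (ξ ^ (t + 1) * D).re := by
          rw [Finset.sum_mul, Complex.re_sum]
        have h3 : l + 1 - (k + 1) = l - k := by omega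
        rw [h2, Finset.sum_Ico_eq_sum_range, h3, h4]
        apply Finset.sum_congr rfl
        intro t _
        have h5 : k + 1 + t - k = t + 1 := by omega
        rw [h5]
      have htb : |∑ i ∈ Finset.Ioc k l, lmmM k α u i| ≤ ‖D‖ * G := by
        rw [htsum]
        calc |((∑ t ∈ Finset.range (l - k), ξ ^ (t + 1)) * D).re|
            ≤ ‖(∑ t ∈ Finset.range (l - k), ξ ^ (t + 1)) * D‖ :=
              Complex.abs_re_le_norm _
          _ = ‖∑ t ∈ Finset.range (l - k), ξ ^ (t + 1)‖ * ‖D‖ :=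
              norm_mul _ _
          _ ≤ G * ‖D‖ := by
              apply mul_le_mul_of_nonneg_right _ (norm_nonneg _)
              rw [hG]
              exact aux_geom ξ hξabs hξne (l - k)
          _ = ‖D‖ * G := mul_comm _ _
      have hbb : |∑ i ∈ Finset.Ioc 0 k, lmmM k α u i| ≤ (k : ℝ) * ((k : ℝ) * A) := by
        calc |∑ i ∈ Finset.Ioc 0 k, lmmM k α u i|
            ≤ ∑ i ∈ Finset.Ioc 0 k, |lmmM k α u i| := Finset.abs_sum_le_sum_abs _ _
          _ ≤ (Finset.Ioc 0 k).card • ((k : ℝ) * A) := by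
              apply Finset.sum_le_card_nsmul
              intro i hi
              exact hbdry i (Finset.mem_Ioc.mp hi).2
          _ = (k : ℝ) * ((k : ℝ) * A) := by
              rw [Nat.card_Ioc, nsmul_eq_mul]; simp
      calc |∑ i ∈ Finset.Icc 1 l, lmmM k α u i|
          ≤ |∑ i ∈ Finset.Ioc 0 k, lmmM k α u i| + |∑ i ∈ Finset.Ioc k l, lmmM k α u i| := by
            rw [hsplit]; exact abs_add_le _ _
        _ ≤ C := by rw [hC]; linarith
  -- choose n
  set m : ℕ := max (max n₀ 1) (Nat.ceil (2 * S * C) + 1) with hm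
  have hm1 : 1 ≤ m := le_trans (le_max_right n₀ 1) (le_trans (le_max_left _ _) (le_refl m))
  have hmn₀ : n₀ ≤ m := le_trans (le_max_left n₀ 1) (le_max_left _ _)
  have hmSC : 2 * S * C < (m : ℝ) := by
    have h1 : (Nat.ceil (2 * S * C) + 1 : ℕ) ≤ m := le_max_right _ _
    have h2 : 2 * S * C ≤ (Nat.ceil (2 * S * C) : ℝ) := Nat.le_ceil _
    have h3 : ((Nat.ceil (2 * S * C) + 1 : ℕ) : ℝ) ≤ (m : ℝ) := Nat.cast_le.mpr h1
    push_cast at h3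
    linarith
  refine ⟨2 * m, by omega, by omega, u, ?_⟩
  -- lower bound on supNorm: some entry is ≥ m / 2
  have hsup : (m : ℝ) / 2 ≤ supNorm (2 * m) u := by
    set a : ℝ := (ξ ^ m).re with ha
    have habs1 : ‖ξ ^ m‖ = 1 := by rw [norm_pow, hξabs, one_pow]
    have hnormsq : (ξ ^ m).re * (ξ ^ m).re + (ξ ^ m).im * (ξ ^ m).im = 1 := by
      have := Complex.sq_norm (ξ ^ m)
      rw [habs1, Complex.normSq_apply] at this
      linarith [this]
    have hum : u m = (m : ℝ) * a := by
      simp only [hu, ha]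
      rw [show ((m : ℕ) : ℂ) = ((m : ℝ) : ℂ) from by norm_cast, Complex.re_ofReal_mul]
    have hu2m : u (2 * m) = (2 * (m : ℝ)) * (2 * a ^ 2 - 1) := by
      have hre : (ξ ^ (2 * m)).re = 2 * a ^ 2 - 1 := by
        rw [show 2 * m = m + m by ring, pow_add, Complex.mul_re]
        rw [ha]
        nlinarith [hnormsq]
      simp only [hu]
      rw [show ((2 * m : ℕ) : ℂ) = ((2 * (m : ℝ) : ℝ) : ℂ) from by push_cast; ring,
        Complex.re_ofReal_mul, hre]
    by_cases hca : 1 / 2 ≤ |a|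
    · have hmem : m ∈ Finset.Icc 1 (2 * m) := Finset.mem_Icc.mpr ⟨hm1, by omega⟩
      have := aux_le_supNorm (2 * m) u hmem
      have habs : (m : ℝ) / 2 ≤ |u m| := by
        rw [hum, abs_mul, Nat.abs_cast]
        calc (m : ℝ) / 2 = (m : ℝ) * (1 / 2) := by ring
          _ ≤ (m : ℝ) * |a| := by
              apply mul_le_mul_of_nonneg_left hca (Nat.cast_nonneg m)
      linarith
    · push_neg at hca
      have hmem : 2 * m ∈ Finset.Icc 1 (2 * m) := Finset.mem_Icc.mpr ⟨by omega, le_refl _⟩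
      have := aux_le_supNorm (2 * m) u hmem
      have habs : (m : ℝ) / 2 ≤ |u (2 * m)| := by
        rw [hu2m, abs_mul]
        have h1 : |2 * a ^ 2 - 1| ≥ 1 / 2 := by
          have : a ^ 2 < 1 / 4 := by nlinarith [abs_nonneg a, sq_abs a]
          rw [abs_sub_comm]
          calc (1 : ℝ) / 2 ≤ 1 - 2 * a ^ 2 := by nlinarith
            _ ≤ |1 - 2 * a ^ 2| := le_abs_self _
        have h2 : |2 * (m : ℝ)| = 2 * (m : ℝ) := by
          rw [abs_of_nonneg]; positivity
        rw [h2]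
        calc (m : ℝ) / 2 ≤ (m : ℝ) := by
              have : (0 : ℝ) ≤ (m : ℝ) := Nat.cast_nonneg m
              linarith
          _ = 2 * (m : ℝ) * (1 / 2) := by ring
          _ ≤ 2 * (m : ℝ) * |2 * a ^ 2 - 1| := by
              apply mul_le_mul_of_nonneg_left h1; positivity
      linarith
  -- upper bound on spijker seminorm
  have hspij : spijkerSeminorm (2 * m) (lmmM k α u) ≤ C :=
    aux_spijker_le (2 * m) (lmmM k α u) hC0 hpartial
  -- conclude
  have h1 : S * spijkerSeminorm (2 * m) (lmmM k α u) ≤ S * C :=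
    mul_le_mul_of_nonneg_left hspij (le_of_lt hS)
  have h2 : S * C < (m : ℝ) / 2 := by linarith
  calc S * spijkerSeminorm (2 * m) (lmmM k α u) ≤ S * C := h1
    _ < (m : ℝ) / 2 := h2
    _ ≤ supNorm (2 * m) u := hsup
end

section
/- Let ξ ∈ ℂ with |ξ| = 1 and ξ ≠ 1. Then there exists a constant c > 0 such that for every n₀ ∈ ℕ there exists l ≥ n₀ with |Re(ξ^{l+1}/(ξ − 1))| ≥ c; that is, |Re(ξ^{l+1}/(ξ − 1))| ≥ c for infinitely many l. (The sequence ξ^l is either periodic with period at least 2 or equidistributes on the unit circle, and in both cases the real part of ξ^{l+1}/(ξ−1) stays away from 0 along a subsequence.) -/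
/-- For `ξ` on the unit circle with `ξ ≠ 1`, the real part of `ξ^{l+1}/(ξ-1)` stays away
from `0` along a subsequence: there is `c > 0` with `|Re(ξ^{l+1}/(ξ-1))| ≥ c` for
infinitely many `l`. -/
theorem re_term_bounded_away (ξ : ℂ) (h1 : ‖ξ‖ = 1) (h2 : ξ ≠ 1) :
    ∃ c : ℝ, 0 < c ∧ ∀ n₀ : ℕ, ∃ l : ℕ, n₀ ≤ l ∧
      c ≤ |(ξ ^ (l + 1) / (ξ - 1)).re| := by
  have hsub : ξ - 1 ≠ 0 := sub_ne_zero.mpr h2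
  have hA : 0 < ‖ξ - 1‖ := by
    simpa [norm_pos_iff] using hsub
  obtain ⟨R, hR⟩ : ∃ R : ℝ, R = 1 / ‖ξ - 1‖ := ⟨_, rfl⟩
  have hRpos : 0 < R := by rw [hR]; positivity
  have habsz : ∀ l : ℕ, ‖ξ ^ (l + 1) / (ξ - 1)‖ = R := by
    intro l
    rw [norm_div, norm_pow, h1, one_pow, hR]
  by_cases him : ξ.im = 0
  · -- then ξ = -1
    have hre : ξ = ((ξ.re : ℝ) : ℂ) := Complex.ext rfl (by simp [him])
    have habs : |ξ.re| = 1 := by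
      rw [hre] at h1; simpa using h1
    have hne : ξ.re ≠ 1 := by
      intro h; apply h2; rw [hre, h]; norm_num
    have hxi : ξ = -1 := by
      rcases abs_eq (by norm_num : (0:ℝ) ≤ 1) |>.mp habs with h | h
      · exact absurd h hne
      · rw [hre, h]; norm_num
    refine ⟨1/2, by norm_num, fun n₀ => ⟨n₀, le_refl _, ?_⟩⟩
    rw [hxi]
    rcases Nat.even_or_odd (n₀ + 1) with he | ho
    · rw [he.neg_one_pow]
      rw [show ((1:ℂ)/(-1-1)).re = -(1/2) by norm_num [Complex.div_re, Complex.normSq],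
        abs_neg, abs_of_nonneg (by norm_num : (0:ℝ) ≤ 1/2)]
    · rw [ho.neg_one_pow]
      rw [show ((-1:ℂ)/(-1-1)).re = 1/2 by norm_num [Complex.div_re, Complex.normSq],
        abs_of_nonneg (by norm_num : (0:ℝ) ≤ 1/2)]
  · -- ξ.im ≠ 0
    have himpos : 0 < |ξ.im| := abs_pos.mpr him
    have himle : |ξ.im| ≤ 1 := by
      simpa [h1] using Complex.abs_im_le_norm ξ
    refine ⟨|ξ.im| * R / 4, by positivity, fun n₀ => ?_⟩
    by_contra hcon
    push_neg at hcon
    set c : ℝ := |ξ.im| * R / 4 with hc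
    clear_value c
    have h1' := hcon n₀ (le_refl _)
    have h2' := hcon (n₀ + 1) (Nat.le_succ _)
    set z : ℂ := ξ ^ (n₀ + 1) / (ξ - 1) with hz
    clear_value z
    have hzz : ξ ^ (n₀ + 1 + 1) / (ξ - 1) = ξ * z := by
      rw [hz]; field_simp; ring
    rw [hzz] at h2'
    have hmul : (ξ * z).re = ξ.re * z.re - ξ.im * z.im := Complex.mul_re ξ z
    rw [hmul] at h2'
    have hsq : z.re ^ 2 + z.im ^ 2 = R ^ 2 := by
      have h := Complex.sq_norm z
      have habs' : ‖z‖ = R := by rw [hz]; exact habsz n₀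
      rw [habs', Complex.normSq_apply] at h
      linear_combination -h
    have hrele : |ξ.re * z.re| ≤ |z.re| := by
      rw [abs_mul]
      have : |ξ.re| ≤ 1 := by simpa [h1] using Complex.abs_re_le_norm ξ
      nlinarith [abs_nonneg z.re]
    have htri : |ξ.im * z.im| ≤ |ξ.re * z.re - ξ.im * z.im| + |ξ.re * z.re| := by
      have := abs_sub_abs_le_abs_sub (ξ.re * z.re) (ξ.im * z.im)
      have h := abs_sub (ξ.re * z.re) (ξ.im * z.im)
      calc |ξ.im * z.im| = |ξ.re * z.re - (ξ.re * z.re - ξ.im * z.im)| := by ring_nf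
        _ ≤ |ξ.re * z.re| + |ξ.re * z.re - ξ.im * z.im| := abs_sub _ _
        _ = |ξ.re * z.re - ξ.im * z.im| + |ξ.re * z.re| := by ring
    have hprod : |ξ.im| * |z.im| < 2 * c := by
      rw [← abs_mul]
      calc |ξ.im * z.im| ≤ |ξ.re * z.re - ξ.im * z.im| + |ξ.re * z.re| := htri
        _ < c + |z.re| := by linarith [hrele]
        _ < 2 * c := by linarith [h1']
    -- c ≤ R/4, so z.im^2 = R^2 - z.re^2 > R^2 - c^2 ≥ 15/16 R^2
    have hcle : c ≤ R / 4 := by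
      rw [hc]; nlinarith
    have hzre : z.re ^ 2 < c ^ 2 := by
      nlinarith [abs_nonneg z.re, sq_abs z.re, h1']
    have hcpos : 0 < c := by rw [hc]; positivity
    have hzim : R ^ 2 * (15 / 16) < z.im ^ 2 := by
      nlinarith [hsq, hzre, hcle, hcpos.le]
    have hzimabs : R / 2 < |z.im| := by
      nlinarith [sq_abs z.im, abs_nonneg z.im]
    have : 2 * c < |ξ.im| * |z.im| := by
      rw [hc]
      nlinarith
    linarith
end

section
/- Let ξ ∈ ℂ with |ξ| = 1 and ξ ≠ 1. Then there exist a constant c > 0 and N ∈ ℕ such that for all n ≥ N, max_{1≤l≤n} |∑_{m=1}^l m·Re(ξ^m)| ≥ c·n. Consequently, with h = T/n, the quantity h·max_{1≤l≤n}|∑_{m=1}^l m·Re(ξ^m)| is bounded below by a positive constant c·T for all sufficiently large n. -/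
lemma abs_sum_le_spijker (n : ℕ) (u : ℕ → ℝ) (l : ℕ) (hl : l ∈ Finset.Icc 1 n) :
    |∑ i ∈ Finset.Icc 1 l, u i| ≤ spijkerSeminorm n u := by
  calc |∑ i ∈ Finset.Icc 1 l, u i| = ‖∑ i ∈ Finset.Icc 1 l, u i‖ :=
        (Real.norm_eq_abs _).symm
    _ = ((‖∑ i ∈ Finset.Icc 1 l, u i‖₊ : NNReal) : ℝ) := (coe_nnnorm _).symm
    _ ≤ _ := NNReal.coe_le_coe.mpr
        (Finset.le_sup (f := fun l => ‖∑ i ∈ Finset.Icc 1 l, u i‖₊) hl)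

lemma witness_sum_id (ξ : ℂ) (hd : ξ - 1 ≠ 0) (l : ℕ) :
    ∑ m ∈ Finset.Icc 1 l, (m : ℂ) * ξ ^ m
      = l * ξ ^ (l + 1) / (ξ - 1) - (ξ ^ (l + 1) - ξ) / (ξ - 1) ^ 2 := by
  induction l with
  | zero => simp
  | succ k ih =>
    rw [Finset.sum_Icc_succ_top (by omega), ih]
    push_cast
    field_simp
    ring

set_option maxHeartbeats 1000000 in
lemma witness_key (ξ : ℂ) (h1 : ‖ξ‖ = 1) (h2 : ξ ≠ 1) :
    ∃ c' : ℝ, 0 < c' ∧ ∀ l : ℕ,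
      c' ≤ |(ξ ^ (l + 1) / (ξ - 1)).re| ∨ c' ≤ |(ξ ^ (l + 2) / (ξ - 1)).re| := by
  have hd : ξ - 1 ≠ 0 := sub_ne_zero.mpr h2
  have hdabs : 0 < ‖ξ - 1‖ := by
    simpa using (norm_pos_iff.mpr hd)
  by_cases him : ξ.im = 0
  · -- then ξ = -1
    have hxi : ξ = -1 := by
      have hre : ξ = (ξ.re : ℂ) := by
        apply Complex.ext <;> simp [him]
      have : |ξ.re| = 1 := by
        rw [hre] at h1; simpa using h1
      rcases abs_eq (by norm_num : (0:ℝ) ≤ 1) |>.mp this with h | h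
      · exfalso; apply h2; rw [hre, h]; simp
      · rw [hre, h]; simp
    refine ⟨1/2, by norm_num, ?_⟩
    intro l
    left
    subst hxi
    rcases Nat.even_or_odd (l + 1) with he | ho
    · rw [he.neg_one_pow]
      norm_num [abs_of_nonneg]
    · rw [ho.neg_one_pow]
      norm_num [abs_of_nonneg]
  · -- ξ.im ≠ 0
    set b : ℝ := ξ.im with hb
    set r : ℝ := 1 / ‖ξ - 1‖ with hr
    have hr0 : 0 < r := by positivity
    have hb2 : (0:ℝ) < b ^ 2 := by positivity
    refine ⟨r * b ^ 2 / (b ^ 2 + 2), by positivity, ?_⟩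
    intro l
    by_contra hcon
    push_neg at hcon
    obtain ⟨hA, hB⟩ := hcon
    set c' : ℝ := r * b ^ 2 / (b ^ 2 + 2) with hc'
    have hc'pos : 0 < c' := by positivity
    have hcb : c' * (b ^ 2 + 2) = r * b ^ 2 := by
      rw [hc']; field_simp
    set z : ℂ := ξ ^ (l + 1) / (ξ - 1) with hz
    have hz2 : ξ ^ (l + 2) / (ξ - 1) = ξ * z := by
      rw [hz]; ring
    rw [hz2] at hB
    have habsz : ‖z‖ = r := by
      rw [hz, norm_div, norm_pow, h1, one_pow, hr]
    have hsq : z.re ^ 2 + z.im ^ 2 = r ^ 2 := by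
      have := Complex.sq_norm z
      rw [habsz, Complex.normSq_apply] at this
      nlinarith [this]
    have hre_mul : (ξ * z).re = ξ.re * z.re - b * z.im := by
      rw [Complex.mul_re]
    have hre_le : |ξ.re| ≤ 1 := by
      have := Complex.abs_re_le_norm ξ
      rwa [h1] at this
    have hbz : |b * z.im| < 2 * c' := by
      have h1' : |b * z.im| ≤ |(ξ * z).re| + |ξ.re * z.re| := by
        have heq : b * z.im = ξ.re * z.re - (ξ * z).re := by rw [hre_mul]; ring
        rw [heq]
        calc |ξ.re * z.re - (ξ * z).re| ≤ |ξ.re * z.re| + |(ξ * z).re| := abs_sub _ _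
          _ = |(ξ * z).re| + |ξ.re * z.re| := by ring
      have h2' : |ξ.re * z.re| < c' := by
        rw [abs_mul]
        calc |ξ.re| * |z.re| ≤ 1 * |z.re| :=
              mul_le_mul_of_nonneg_right hre_le (abs_nonneg _)
          _ = |z.re| := one_mul _
          _ < c' := hA
      linarith
    have h3 : z.re ^ 2 < c' ^ 2 := by nlinarith [abs_nonneg z.re, sq_abs z.re, hA]
    have h4 : (b * z.im) ^ 2 < (2 * c') ^ 2 := by
      nlinarith [abs_nonneg (b * z.im), sq_abs (b * z.im), hbz]
    -- combine
    have e1 : b ^ 2 * z.re ^ 2 + b ^ 2 * z.im ^ 2 = r ^ 2 * b ^ 2 := by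
      linear_combination b ^ 2 * hsq
    have e2 : b ^ 2 * z.re ^ 2 < b ^ 2 * c' ^ 2 := by
      exact mul_lt_mul_of_pos_left h3 hb2
    have e3 : r ^ 2 * b ^ 2 < c' ^ 2 * (b ^ 2 + 4) := by nlinarith [e1, e2, h4]
    have e4 : c' ^ 2 * (b ^ 2 + 2) ^ 2 = r ^ 2 * b ^ 4 := by
      linear_combination (c' * (b ^ 2 + 2) + r * b ^ 2) * hcb
    have e5 := mul_lt_mul_of_pos_right e3 (show (0:ℝ) < (b ^ 2 + 2) ^ 2 by positivity)
    have e8 : c' ^ 2 * (b ^ 2 + 4) * (b ^ 2 + 2) ^ 2 = r ^ 2 * b ^ 4 * (b ^ 2 + 4) := by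
      linear_combination (b ^ 2 + 4) * e4
    have e7 : r ^ 2 * b ^ 2 * (b ^ 2 + 2) ^ 2 < r ^ 2 * b ^ 4 * (b ^ 2 + 4) := by
      linarith [e5, e8]
    have e6 : (0:ℝ) < r ^ 2 * b ^ 2 := by positivity
    nlinarith [e7, e6]

/-- For `ξ` on the unit circle with `ξ ≠ 1`, the Spijker seminorm of the witness vector
`w m = m·Re(ξ^m)` grows at least linearly: there are `c > 0` and `N` such that
`max_{1≤l≤n} |∑_{m=1}^l m·Re(ξ^m)| ≥ c·n` for all `n ≥ N`; consequently, with `h = T/n`,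
`h·max_{1≤l≤n} |∑_{m=1}^l m·Re(ξ^m)| ≥ c·T` for all sufficiently large `n`. -/
theorem witness_spijker_linear_growth (ξ : ℂ) (h1 : ‖ξ‖ = 1) (h2 : ξ ≠ 1) :
    ∃ c : ℝ, 0 < c ∧ ∃ N : ℕ, 1 ≤ N ∧ ∀ n : ℕ, N ≤ n →
      c * n ≤ spijkerSeminorm n (fun m => (m : ℝ) * (ξ ^ m).re) ∧
      ∀ T : ℝ, 0 < T →
        c * T ≤ (T / n) * spijkerSeminorm n (fun m => (m : ℝ) * (ξ ^ m).re) := by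
  obtain ⟨c', hc', hkey⟩ := witness_key ξ h1 h2
  have hd : ξ - 1 ≠ 0 := sub_ne_zero.mpr h2
  have hdabs : 0 < ‖ξ - 1‖ := by simpa using (norm_pos_iff.mpr hd)
  set C : ℝ := 2 / ‖ξ - 1‖ ^ 2 with hC
  have hC0 : 0 ≤ C := by positivity
  -- remainder bound: for all l, |Re A_l - l * Re(ξ^{l+1}/(ξ-1))| ≤ C
  have hrem : ∀ l : ℕ, |((ξ ^ (l + 1) - ξ) / (ξ - 1) ^ 2).re| ≤ C := by
    intro l
    calc |((ξ ^ (l + 1) - ξ) / (ξ - 1) ^ 2).re|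
        ≤ ‖(ξ ^ (l + 1) - ξ) / (ξ - 1) ^ 2‖ := Complex.abs_re_le_norm _
      _ = ‖ξ ^ (l + 1) - ξ‖ / ‖ξ - 1‖ ^ 2 := by
          rw [norm_div, norm_pow]
      _ ≤ 2 / ‖ξ - 1‖ ^ 2 := by
          apply div_le_div_of_nonneg_right ?_ (by positivity) |>.trans_eq rfl
          calc ‖ξ ^ (l + 1) - ξ‖
              ≤ ‖ξ ^ (l + 1)‖ + ‖ξ‖ := by
                exact (norm_sub_le _ _)
            _ = 2 := by rw [norm_pow, h1]; norm_num
  -- partial real sums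
  have hsumre : ∀ l : ℕ, ∑ i ∈ Finset.Icc 1 l, (i : ℝ) * (ξ ^ i).re
      = (l : ℝ) * (ξ ^ (l + 1) / (ξ - 1)).re - ((ξ ^ (l + 1) - ξ) / (ξ - 1) ^ 2).re := by
    intro l
    have := congrArg Complex.re (witness_sum_id ξ hd l)
    rw [Complex.re_sum] at this
    simp only [Complex.mul_re, Complex.natCast_re, Complex.natCast_im, zero_mul,
      sub_zero] at this
    rw [this, Complex.sub_re]
    congr 1
    rw [mul_div_assoc]
    simp [Complex.mul_re]
  refine ⟨c' / 2, by positivity, 2 + ⌈2 * C / c'⌉₊, by omega, ?_⟩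
  intro n hn
  have hn2 : 2 ≤ n := le_trans (by omega) hn
  have hnR : (2 : ℝ) + 2 * C / c' ≤ (n : ℝ) := by
    have h1' : (2 + ⌈2 * C / c'⌉₊ : ℕ) ≤ n := hn
    have h2' : ((2 + ⌈2 * C / c'⌉₊ : ℕ) : ℝ) ≤ (n : ℝ) := by exact_mod_cast h1'
    have h3' : 2 * C / c' ≤ (⌈2 * C / c'⌉₊ : ℝ) := Nat.le_ceil _
    push_cast at h2'
    linarith
  -- main bound
  have hmain : c' / 2 * n ≤ spijkerSeminorm n (fun m => (m : ℝ) * (ξ ^ m).re) := by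
    rcases hkey (n - 1) with hk | hk
    · -- use l = n - 1
      have hln : n - 1 + 1 = n := by omega
      rw [hln] at hk
      have hmem : n - 1 ∈ Finset.Icc 1 n := by
        simp only [Finset.mem_Icc]; omega
      have hle := abs_sum_le_spijker n (fun m => (m : ℝ) * (ξ ^ m).re) (n - 1) hmem
      rw [hsumre (n - 1), hln] at hle
      have hcast : ((n - 1 : ℕ) : ℝ) = (n : ℝ) - 1 := by
        have : (1 : ℕ) ≤ n := by omega
        push_cast [this]; ring
      rw [hcast] at hle
      have habs : ((n : ℝ) - 1) * c' - C ≤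
          |((n : ℝ) - 1) * (ξ ^ n / (ξ - 1)).re - ((ξ ^ n - ξ) / (ξ - 1) ^ 2).re| := by
        have h5 := hrem (n - 1)
        rw [hln] at h5
        have h6 : ((n : ℝ) - 1) * c' ≤ ((n : ℝ) - 1) * |(ξ ^ n / (ξ - 1)).re| := by
          apply mul_le_mul_of_nonneg_left hk
          have : (2 : ℝ) ≤ (n : ℝ) := by exact_mod_cast hn2
          linarith
        have hpos1 : (0 : ℝ) ≤ (n : ℝ) - 1 := by
          have : (2 : ℝ) ≤ (n : ℝ) := by exact_mod_cast hn2
          linarith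
        have h7 : ((n : ℝ) - 1) * |(ξ ^ n / (ξ - 1)).re|
            = |((n : ℝ) - 1) * (ξ ^ n / (ξ - 1)).re| := by
          rw [abs_mul, abs_of_nonneg hpos1]
        have h8 := abs_sub_abs_le_abs_sub (((n : ℝ) - 1) * (ξ ^ n / (ξ - 1)).re)
          (((ξ ^ n - ξ) / (ξ - 1) ^ 2).re)
        linarith [h6, h7.le, h8, h5]
      have h9 : 2 * c' + 2 * C ≤ c' * n := by
        have h10 := mul_le_mul_of_nonneg_left hnR hc'.le
        have h11 : c' * (2 + 2 * C / c') = 2 * c' + 2 * C := by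
          field_simp
        linarith [h10, h11.ge]
      have hlin : c' / 2 * n ≤ ((n : ℝ) - 1) * c' - C := by linarith
      linarith
    · -- use l = n
      have hln : n - 1 + 2 = n + 1 := by omega
      rw [hln] at hk
      have hmem : n ∈ Finset.Icc 1 n := by
        simp only [Finset.mem_Icc]; omega
      have hle := abs_sum_le_spijker n (fun m => (m : ℝ) * (ξ ^ m).re) n hmem
      rw [hsumre n] at hle
      have habs : (n : ℝ) * c' - C ≤
          |(n : ℝ) * (ξ ^ (n + 1) / (ξ - 1)).re - ((ξ ^ (n + 1) - ξ) / (ξ - 1) ^ 2).re| := by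
        have h5 := hrem n
        have hnpos : (0 : ℝ) ≤ (n : ℝ) := Nat.cast_nonneg n
        have h6 : (n : ℝ) * c' ≤ (n : ℝ) * |(ξ ^ (n + 1) / (ξ - 1)).re| :=
          mul_le_mul_of_nonneg_left hk hnpos
        have h7 : (n : ℝ) * |(ξ ^ (n + 1) / (ξ - 1)).re|
            = |(n : ℝ) * (ξ ^ (n + 1) / (ξ - 1)).re| := by
          rw [abs_mul, abs_of_nonneg hnpos]
        have h8 := abs_sub_abs_le_abs_sub ((n : ℝ) * (ξ ^ (n + 1) / (ξ - 1)).re)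
          (((ξ ^ (n + 1) - ξ) / (ξ - 1) ^ 2).re)
        linarith [h6, h7.le, h8, h5]
      have h9 : 2 * c' + 2 * C ≤ c' * n := by
        have h10 := mul_le_mul_of_nonneg_left hnR hc'.le
        have h11 : c' * (2 + 2 * C / c') = 2 * c' + 2 * C := by
          field_simp
        linarith [h10, h11.ge]
      have hlin : c' / 2 * n ≤ (n : ℝ) * c' - C := by linarith
      linarith
  refine ⟨hmain, ?_⟩
  intro T hT
  have hn0 : (0 : ℝ) < (n : ℝ) := by
    have : (2 : ℝ) ≤ (n : ℝ) := by exact_mod_cast hn2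
    linarith
  have : c' / 2 * T = T / n * (c' / 2 * n) := by field_simp
  rw [this]
  exact mul_le_mul_of_nonneg_left hmain (by positivity)
end
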